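/- Let ℓ be a prime and let R be a commutative local ring with maximal ideal m and residue field k = R/m, such that R is finite and free as a module over the ℓ-adic integers Z_ℓ and ℓ ∈ m. Suppose that the Z_ℓ-linear dual Hom_{Z_ℓ}(R, Z_ℓ) is isomorphic to R as an R-module (i.e., R is Gorenstein in the sense of Mazur). Then the m-torsion submodule (R/ℓR)[m] = {x ∈ R/ℓR : a·x = 0 for all a ∈ m} is a 1-dimensional vector space over k. -/
import Mathlib

open IsLocalRing Submodule Module

section helpers

variable {ℓ : ℕ} [Fact ℓ.Prime]

lemma toZMod_eq_zero_iff (x : ℤ_[ℓ]) : PadicInt.toZMod x = 0 ↔ (ℓ : ℤ_[ℓ]) ∣ x := by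
  rw [← RingHom.mem_ker, PadicInt.ker_toZMod, PadicInt.maximalIdeal_eq_span_p,
    Ideal.mem_span_singleton]

lemma toZMod_natCast_ell : PadicInt.toZMod ((ℓ : ℤ_[ℓ])) = 0 := by
  rw [toZMod_eq_zero_iff]

variable {R : Type*} [CommRing R] [IsLocalRing R] [Algebra ℤ_[ℓ] R]

-- key consequence of the Gorenstein hypothesis
lemma symm_eq (e : (R →ₗ[ℤ_[ℓ]] ℤ_[ℓ]) ≃ₗ[ℤ_[ℓ]] R)
    (he : ∀ (r : R) (f : R →ₗ[ℤ_[ℓ]] ℤ_[ℓ]),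
      e (f ∘ₗ LinearMap.mulLeft ℤ_[ℓ] r) = r * e f)
    (z : R) : e.symm z = (e.symm 1) ∘ₗ LinearMap.mulLeft ℤ_[ℓ] z := by
  apply e.injective
  rw [he z (e.symm 1), e.apply_symm_apply, e.apply_symm_apply, mul_one]

lemma symm_apply (e : (R →ₗ[ℤ_[ℓ]] ℤ_[ℓ]) ≃ₗ[ℤ_[ℓ]] R)
    (he : ∀ (r : R) (f : R →ₗ[ℤ_[ℓ]] ℤ_[ℓ]),
      e (f ∘ₗ LinearMap.mulLeft ℤ_[ℓ] r) = r * e f)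
    (z y : R) : e.symm z y = e.symm 1 (z * y) := by
  rw [symm_eq e he z]; rfl

/-- divisibility lemma -/
lemma div_lemma (e : (R →ₗ[ℤ_[ℓ]] ℤ_[ℓ]) ≃ₗ[ℤ_[ℓ]] R)
    (he : ∀ (r : R) (f : R →ₗ[ℤ_[ℓ]] ℤ_[ℓ]),
      e (f ∘ₗ LinearMap.mulLeft ℤ_[ℓ] r) = r * e f)
    (x : R) (h : ∀ y : R, (ℓ : ℤ_[ℓ]) ∣ e.symm 1 (x * y)) :
    ∃ r : R, x = (ℓ : R) * r := by
  have hl0 : (ℓ : ℤ_[ℓ]) ≠ 0 := Nat.cast_ne_zero.mpr (Fact.out : ℓ.Prime).ne_zero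
  have hc : ∀ y : R, ∃ t : ℤ_[ℓ], e.symm 1 (x * y) = ℓ * t := fun y => (h y).imp (fun t ht => ht)
  classical
  set g : R → ℤ_[ℓ] := fun y => (hc y).choose with hgdef
  have hg : ∀ y : R, e.symm 1 (x * y) = (ℓ : ℤ_[ℓ]) * g y := fun y => (hc y).choose_spec
  set f : R →ₗ[ℤ_[ℓ]] ℤ_[ℓ] :=
    { toFun := g
      map_add' := by
        intro y₁ y₂
        apply mul_left_cancel₀ hl0
        rw [mul_add, ← hg y₁, ← hg y₂, ← hg (y₁ + y₂), mul_add x, map_add]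
      map_smul' := by
        intro c y
        apply mul_left_cancel₀ hl0
        show (ℓ : ℤ_[ℓ]) * g (c • y) = (ℓ:ℤ_[ℓ]) * (c • g y)
        rw [mul_smul_comm, ← hg y, ← map_smul, ← mul_smul_comm, ← hg (c • y)]
    } with hf
  refine ⟨e f, ?_⟩
  apply e.symm.injective
  ext y
  have h1 : e.symm ((ℓ : R) * e f) y = e.symm 1 (((ℓ:R) * e f) * y) := symm_apply e he _ y
  rw [LinearMap.ext_iff] at *
  have h2 : (ℓ:R) * e f * y = (ℓ : ℤ_[ℓ]) • (e f * y) := by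
    rw [Algebra.smul_def, map_natCast, mul_assoc]
  rw [symm_apply e he x y, h1, h2, map_smul, smul_eq_mul, ← symm_apply e he (e f) y,
    e.symm_apply_apply, hf]
  exact hg y

variable [Module.Finite ℤ_[ℓ] R] [Module.Free ℤ_[ℓ] R]

lemma finite_quotient (I : Ideal R) (hI : (ℓ : R) ∈ I) : Finite (R ⧸ I) := by
  classical
  set b := Module.Free.chooseBasis ℤ_[ℓ] R with hb
  set ι := Module.Free.ChooseBasisIndex ℤ_[ℓ] R
  apply Finite.of_surjective (f := fun v : ι → Fin ℓ =>
    Ideal.Quotient.mk I (∑ i, ((v i : ℕ) : R) * b i))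
  intro q
  obtain ⟨x, rfl⟩ := Ideal.Quotient.mk_surjective q
  have hlt : ∀ i : ι, (b.repr x i).appr 1 < ℓ := by
    intro i
    simpa using PadicInt.appr_lt (b.repr x i) 1
  refine ⟨fun i => ⟨(b.repr x i).appr 1, hlt i⟩, ?_⟩
  rw [Ideal.Quotient.mk_eq_mk_iff_sub_mem]
  have hx : x = ∑ i, b.repr x i • b i := (b.sum_repr x).symm
  have key : (∑ i, (((b.repr x i).appr 1 : ℕ) : R) * b i) - x
      = ∑ i, ((((b.repr x i).appr 1 : ℕ) : R) * b i - b.repr x i • b i) := by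
    rw [Finset.sum_sub_distrib, ← hx]
  rw [key]
  apply Ideal.sum_mem
  intro i _
  obtain ⟨d, hd⟩ : ∃ d, b.repr x i - ((b.repr x i).appr 1 : ℤ_[ℓ]) = (ℓ : ℤ_[ℓ]) * d := by
    have := PadicInt.appr_spec 1 (b.repr x i)
    rw [pow_one, Ideal.mem_span_singleton] at this
    exact this
  have heq : (((b.repr x i).appr 1 : ℕ) : R) * b i - b.repr x i • b i
      = (ℓ : R) * (-(d • b i)) := by
    have h1 : (((b.repr x i).appr 1 : ℕ) : R) * b i
        = (((b.repr x i).appr 1 : ℤ_[ℓ])) • b i := by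
      rw [Algebra.smul_def, map_natCast]
    rw [h1, ← sub_smul, ← neg_sub, hd, neg_smul, mul_smul, mul_neg, Algebra.smul_def, map_natCast]
  rw [heq]
  exact Ideal.mul_mem_right _ _ hI


lemma card_eq_of_kernels {G A B : Type*} [AddGroup G] [AddCommGroup A] [AddCommGroup B]
    (f : G →+ A) (g : G →+ B) (hf : Function.Surjective f) (hg : Function.Surjective g)
    (h : f.ker = g.ker) : Nat.card A = Nat.card B := by
  rw [← Nat.card_congr (QuotientAddGroup.quotientKerEquivOfSurjective f hf).toEquiv,
    ← Nat.card_congr (QuotientAddGroup.quotientKerEquivOfSurjective g hg).toEquiv, h]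

lemma phi_span (φ : R →ₗ[ℤ_[ℓ]] ℤ_[ℓ]) (x : R) (hx : x ∈ Ideal.span {(ℓ : R)}) :
    (ℓ : ℤ_[ℓ]) ∣ φ x := by
  obtain ⟨a, rfl⟩ := Ideal.mem_span_singleton'.mp hx
  have h1 : a * (ℓ : R) = (ℓ : ℤ_[ℓ]) • a := by rw [Algebra.smul_def, map_natCast, mul_comm]
  rw [h1, map_smul, smul_eq_mul]
  exact ⟨φ a, rfl⟩

end helpers

set_option maxHeartbeats 1000000 in
/-- Let `ℓ` be a prime and `R` a commutative local ring with maximal ideal `m` and residue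
field `k = R/m`, finite and free as a module over `ℤ_[ℓ]`, with `ℓ ∈ m`. If the
`ℤ_[ℓ]`-linear dual `Hom_{ℤ_[ℓ]}(R, ℤ_[ℓ])` is isomorphic to `R` as an `R`-module
(Gorenstein in the sense of Mazur), then the `m`-torsion submodule `(R/ℓR)[m]` is a
1-dimensional vector space over `k`. -/
theorem gorenstein_socle_one_dimensional
    (ℓ : ℕ) [Fact ℓ.Prime]
    (R : Type*) [CommRing R] [IsLocalRing R]
    [Algebra ℤ_[ℓ] R] [Module.Finite ℤ_[ℓ] R] [Module.Free ℤ_[ℓ] R]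
    (hl : (ℓ : R) ∈ IsLocalRing.maximalIdeal R)
    (hGor : ∃ e : (R →ₗ[ℤ_[ℓ]] ℤ_[ℓ]) ≃ₗ[ℤ_[ℓ]] R,
      ∀ (r : R) (f : R →ₗ[ℤ_[ℓ]] ℤ_[ℓ]),
        e (f ∘ₗ LinearMap.mulLeft ℤ_[ℓ] r) = r * e f) :
    Module.rank (R ⧸ IsLocalRing.maximalIdeal R)
      (Submodule.torsionBySet R (R ⧸ Ideal.span {(ℓ : R)})
        (IsLocalRing.maximalIdeal R)) = 1 := by
  classical
  obtain ⟨e, he⟩ := hGor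
  set φ : R →ₗ[ℤ_[ℓ]] ℤ_[ℓ] := e.symm 1 with hφ
  have hellR : (ℓ : R) ∈ Ideal.span {(ℓ : R)} := Ideal.subset_span rfl
  have hQfin : Finite (R ⧸ Ideal.span {(ℓ : R)}) := finite_quotient _ hellR
  have hkfin : Finite (R ⧸ maximalIdeal R) := finite_quotient _ hl
  have hker : ∀ x : R, (∀ y : R, (ℓ : ℤ_[ℓ]) ∣ φ (x * y)) ↔ x ∈ Ideal.span {(ℓ : R)} := by
    intro x
    constructor
    · intro h
      obtain ⟨r, hr⟩ := div_lemma e he x h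
      exact hr ▸ Ideal.mul_mem_right _ _ hellR
    · intro h y
      exact phi_span φ _ (Ideal.mul_mem_right _ _ h)
  set S : Ideal R := (Ideal.span {(ℓ : R)}).colon (maximalIdeal R) with hS
  have hmemS : ∀ x : R, x ∈ S ↔ ∀ a ∈ maximalIdeal R, a * x ∈ Ideal.span {(ℓ : R)} := by
    intro x
    rw [hS, Submodule.mem_colon]
    exact ⟨fun h a ha => by rw [mul_comm]; exact h a ha,
      fun h a ha => by rw [smul_eq_mul, mul_comm]; exact h a ha⟩
  set N := Submodule.torsionBySet R (R ⧸ Ideal.span {(ℓ : R)}) (maximalIdeal R) with hN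
  have hNmem : ∀ q : R ⧸ Ideal.span {(ℓ : R)}, q ∈ N ↔ ∀ a ∈ maximalIdeal R, a • q = 0 := by
    intro q
    rw [hN, Submodule.mem_torsionBySet_iff]
    exact ⟨fun h a ha => h ⟨a, ha⟩, fun h a => h a a.2⟩
  have hmk_smul : ∀ (a x : R), a • Ideal.Quotient.mk (Ideal.span {(ℓ : R)}) x
      = Ideal.Quotient.mk (Ideal.span {(ℓ : R)}) (a * x) := fun a x => rfl
  set f₁ : S →+ N :=
    { toFun := fun x => ⟨Ideal.Quotient.mk (Ideal.span {(ℓ : R)}) (x : R), by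
        rw [hNmem]
        intro a ha
        rw [hmk_smul, Ideal.Quotient.eq_zero_iff_mem]
        exact (hmemS x).mp x.2 a ha⟩
      map_zero' := by ext; simp
      map_add' := by intro x y; ext; simp } with hf₁
  have hf₁surj : Function.Surjective f₁ := by
    rintro ⟨q, hq⟩
    obtain ⟨x, rfl⟩ := Ideal.Quotient.mk_surjective q
    have hxS : x ∈ S := by
      rw [hmemS]
      intro a ha
      rw [← Ideal.Quotient.eq_zero_iff_mem, ← hmk_smul]
      exact (hNmem _).mp hq a ha
    exact ⟨⟨x, hxS⟩, rfl⟩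
  have hkerf₁ : ∀ x : S, f₁ x = 0 ↔ (x : R) ∈ Ideal.span {(ℓ : R)} := by
    intro x
    rw [hf₁, Subtype.ext_iff]
    exact Ideal.Quotient.eq_zero_iff_mem
  have hlk : ((ℓ : ℕ) : R ⧸ maximalIdeal R) = 0 := by
    rw [← map_natCast (Ideal.Quotient.mk (maximalIdeal R)), Ideal.Quotient.eq_zero_iff_mem]
    exact hl
  have hchar : CharP (R ⧸ maximalIdeal R) ℓ := by
    have h1 : ringChar (R ⧸ maximalIdeal R) ∣ ℓ := ringChar.dvd hlk
    rcases (Fact.out : ℓ.Prime).eq_one_or_self_of_dvd _ h1 with h2 | h2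
    · exfalso
      letI := ringChar.charP (R ⧸ maximalIdeal R)
      exact CharP.char_ne_one (R ⧸ maximalIdeal R) (ringChar (R ⧸ maximalIdeal R)) h2
    · exact ringChar.of_eq h2
  letI : CharP (R ⧸ maximalIdeal R) ℓ := hchar
  letI : Algebra (ZMod ℓ) (R ⧸ maximalIdeal R) := ZMod.algebra _ ℓ
  have wd : ∀ x : S, ∀ y y' : R, Submodule.quotientRel (maximalIdeal R) y y' →
      PadicInt.toZMod (φ (y * (x : R))) = PadicInt.toZMod (φ (y' * (x : R))) := by
    intro x y y' hyy
    rw [Submodule.quotientRel_def] at hyy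
    have h1 : (ℓ : ℤ_[ℓ]) ∣ (φ (y * (x : R)) - φ (y' * (x : R))) := by
      rw [← map_sub, ← sub_mul]
      exact phi_span φ _ ((hmemS x).mp x.2 _ hyy)
    have h2 := (toZMod_eq_zero_iff (φ (y * (x : R)) - φ (y' * (x : R)))).mpr h1
    rwa [map_sub, sub_eq_zero] at h2
  set Θ : S → Module.Dual (ZMod ℓ) (R ⧸ maximalIdeal R) := fun x =>
    { toFun := fun z => Quotient.liftOn' z (fun y => PadicInt.toZMod (φ (y * (x : R)))) (wd x)
      map_add' := by
        intro z w
        refine Quotient.inductionOn₂' z w (fun y y' => ?_)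
        show PadicInt.toZMod (φ ((y + y') * (x : R)))
          = PadicInt.toZMod (φ (y * (x : R))) + PadicInt.toZMod (φ (y' * (x : R)))
        rw [add_mul, map_add, map_add]
      map_smul' := by
        intro c z
        refine Quotient.inductionOn' z (fun y => ?_)
        have hc : ((c.val : ℕ) : ZMod ℓ) = c := by rw [ZMod.natCast_val, ZMod.cast_id]
        have h3 : ∀ (n : ℕ) (y : R), ((n : ZMod ℓ)) • (Submodule.Quotient.mk y : R ⧸ maximalIdeal R)
            = Submodule.Quotient.mk (n • y) := by
          intro n y
          rw [Nat.cast_smul_eq_nsmul (ZMod ℓ) n (Submodule.Quotient.mk y : R ⧸ maximalIdeal R)]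
          exact (Submodule.Quotient.mk_smul (maximalIdeal R) n y).symm
        rw [Submodule.Quotient.mk''_eq_mk, ← hc, h3]
        show PadicInt.toZMod (φ ((c.val • y) * (x : R)))
          = ((c.val : ℕ) : ZMod ℓ) * PadicInt.toZMod (φ (y * (x : R)))
        rw [smul_mul_assoc, map_nsmul, map_nsmul, nsmul_eq_mul]
      } with hΘ
  have Θmk : ∀ (x : S) (y : R),
      Θ x (Ideal.Quotient.mk (maximalIdeal R) y) = PadicInt.toZMod (φ (y * (x : R))) :=
    fun x y => rfl
  set f₂ : S →+ Module.Dual (ZMod ℓ) (R ⧸ maximalIdeal R) :=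
    { toFun := Θ
      map_zero' := by
        apply LinearMap.ext
        intro z
        refine Quotient.inductionOn' z (fun y => ?_)
        show PadicInt.toZMod (φ (y * ((0 : S) : R))) = 0
        rw [ZeroMemClass.coe_zero, mul_zero, map_zero, map_zero]
      map_add' := by
        intro x₁ x₂
        apply LinearMap.ext
        intro z
        refine Quotient.inductionOn' z (fun y => ?_)
        show PadicInt.toZMod (φ (y * ((x₁ + x₂ : S) : R)))
          = PadicInt.toZMod (φ (y * (x₁ : R))) + PadicInt.toZMod (φ (y * (x₂ : R)))
        rw [AddMemClass.coe_add, mul_add, map_add, map_add] } with hf₂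
  have hsymm_ap : ∀ z y : R, φ (z * y) = e.symm z y := fun z y => (symm_apply e he z y).symm
  have hfeq : ∀ (f : R →ₗ[ℤ_[ℓ]] ℤ_[ℓ]) (y : R), f y = φ (e f * y) := by
    intro f y
    rw [hsymm_ap (e f) y, e.symm_apply_apply]
  have hkerf₂ : ∀ x : S, f₂ x = 0 ↔ (x : R) ∈ Ideal.span {(ℓ : R)} := by
    intro x
    constructor
    · intro h
      rw [← hker]
      intro y
      rw [← toZMod_eq_zero_iff, mul_comm, ← Θmk x y]
      rw [hf₂] at h
      simp only [AddMonoidHom.coe_mk, ZeroHom.coe_mk] at h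
      rw [h]
      rfl
    · intro h
      apply LinearMap.ext
      intro z
      refine Quotient.inductionOn' z (fun y => ?_)
      show PadicInt.toZMod (φ (y * (x : R))) = 0
      rw [toZMod_eq_zero_iff]
      exact phi_span φ _ (Ideal.mul_mem_left _ _ h)
  have hf₂surj : Function.Surjective f₂ := by
    intro g
    set Ghom : R →+ ZMod ℓ := g.toAddMonoidHom.comp
      ((Ideal.Quotient.mk (maximalIdeal R)).toAddMonoidHom) with hGhom
    have hGm : ∀ y ∈ maximalIdeal R, Ghom y = 0 := by
      intro y hy
      show g (Ideal.Quotient.mk (maximalIdeal R) y) = 0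
      rw [Ideal.Quotient.eq_zero_iff_mem.mpr hy, map_zero]
    have hGsmul : ∀ (c : ℤ_[ℓ]) (y : R), Ghom (c • y) = PadicInt.toZMod c * Ghom y := by
      intro c y
      obtain ⟨d, hd⟩ : ∃ d, c - (c.appr 1 : ℤ_[ℓ]) = (ℓ : ℤ_[ℓ]) * d := by
        have h5 := PadicInt.appr_spec 1 c
        rwa [pow_one, Ideal.mem_span_singleton] at h5
      have hcd : c = (c.appr 1 : ℤ_[ℓ]) + (ℓ : ℤ_[ℓ]) * d := by
        rw [← hd]; ring
      have h6 : c • y = (c.appr 1 : ℕ) • y + (ℓ : R) * (d • y) := by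
        calc c • y = ((c.appr 1 : ℤ_[ℓ]) + (ℓ : ℤ_[ℓ]) * d) • y := by rw [← hcd]
          _ = (c.appr 1 : ℤ_[ℓ]) • y + ((ℓ : ℤ_[ℓ]) * d) • y := by rw [add_smul]
          _ = (c.appr 1 : ℕ) • y + (ℓ : R) * (d • y) := by
              rw [Nat.cast_smul_eq_nsmul, mul_smul, Algebra.smul_def (ℓ : ℤ_[ℓ]), map_natCast]
      have h7 : PadicInt.toZMod c = ((c.appr 1 : ℕ) : ZMod ℓ) := by
        conv_lhs => rw [hcd]
        rw [map_add, map_mul, map_natCast, toZMod_natCast_ell, zero_mul, add_zero]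
      rw [h6, map_add, AddMonoidHom.map_nsmul, hGm _ (Ideal.mul_mem_right _ _ hl),
        add_zero, nsmul_eq_mul, h7]
    set b := Module.Free.chooseBasis ℤ_[ℓ] R with hb
    set f : R →ₗ[ℤ_[ℓ]] ℤ_[ℓ] := b.constr ℤ_[ℓ] (fun i => (((Ghom (b i)).val : ℕ) : ℤ_[ℓ])) with hfdef
    have hfG : ∀ y, PadicInt.toZMod (f y) = Ghom y := by
      intro y
      conv_lhs => rw [← b.sum_repr y]
      conv_rhs => rw [← b.sum_repr y]
      rw [map_sum, map_sum, map_sum Ghom]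
      apply Finset.sum_congr rfl
      intro i _
      rw [map_smul, smul_eq_mul, map_mul, hGsmul]
      congr 1
      rw [hfdef, Basis.constr_basis, map_natCast, ZMod.natCast_val, ZMod.cast_id]
    have hef : ∀ y, f y = φ (y * e f) := by
      intro y
      rw [hfeq f y, mul_comm]
    have heS : e f ∈ S := by
      rw [hmemS]
      intro a ha
      rw [← hker]
      intro y
      rw [← toZMod_eq_zero_iff]
      have h8 : a * e f * y = (a * y) * e f := by ring
      rw [h8, ← hef (a * y), hfG, hGm _ (Ideal.mul_mem_right _ _ ha)]
    refine ⟨⟨e f, heS⟩, ?_⟩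
    apply LinearMap.ext
    intro z
    refine Quotient.inductionOn' z (fun y => ?_)
    show PadicInt.toZMod (φ (y * e f)) = g (Quotient.mk'' y)
    rw [← hef y, hfG]
    rfl
  have hcard : Nat.card N = Nat.card (Module.Dual (ZMod ℓ) (R ⧸ maximalIdeal R)) := by
    apply card_eq_of_kernels f₁ f₂ hf₁surj hf₂surj
    ext x
    rw [AddMonoidHom.mem_ker, AddMonoidHom.mem_ker, hkerf₁, ← hkerf₂]
  letI : Finite (R ⧸ maximalIdeal R) := hkfin
  letI : Finite (R ⧸ Ideal.span {(ℓ : R)}) := hQfin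
  letI : Field (R ⧸ maximalIdeal R) := Ideal.Quotient.field _
  letI : Fintype (R ⧸ maximalIdeal R) := Fintype.ofFinite _
  letI : Finite (Module.Dual (ZMod ℓ) (R ⧸ maximalIdeal R)) :=
    Finite.of_injective (fun f => (f : (R ⧸ maximalIdeal R) → ZMod ℓ)) DFunLike.coe_injective
  letI : Fintype (Module.Dual (ZMod ℓ) (R ⧸ maximalIdeal R)) := Fintype.ofFinite _
  letI : Fintype N := Fintype.ofFinite _
  letI : Module.Finite (R ⧸ maximalIdeal R) N := Module.Finite.of_finite
  have hq1 : Fintype.card (Module.Dual (ZMod ℓ) (R ⧸ maximalIdeal R))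
      = Fintype.card (R ⧸ maximalIdeal R) := by
    rw [card_eq_pow_finrank (K := ZMod ℓ) (V := Module.Dual (ZMod ℓ) (R ⧸ maximalIdeal R)),
      card_eq_pow_finrank (K := ZMod ℓ) (V := R ⧸ maximalIdeal R), Subspace.dual_finrank_eq]
  have hNk : Nat.card N = Nat.card (R ⧸ maximalIdeal R) := by
    rw [hcard, Nat.card_eq_fintype_card, Nat.card_eq_fintype_card, hq1]
  have hcard2 : Fintype.card N
      = Fintype.card (R ⧸ maximalIdeal R) ^ Module.finrank (R ⧸ maximalIdeal R) N :=
    card_eq_pow_finrank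
  have h2card : 2 ≤ Fintype.card (R ⧸ maximalIdeal R) := Fintype.one_lt_card
  have hfr : Module.finrank (R ⧸ maximalIdeal R) N = 1 := by
    apply Nat.pow_right_injective h2card
    show Fintype.card (R ⧸ maximalIdeal R) ^ _ = Fintype.card (R ⧸ maximalIdeal R) ^ _
    rw [← hcard2, pow_one, ← Nat.card_eq_fintype_card, ← Nat.card_eq_fintype_card, hNk]
  rw [← Module.finrank_eq_rank, hfr, Nat.cast_one]
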